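/- Let Λ ⊂ ℂⁿ be a lattice of full rank and π : ℂⁿ → ℂⁿ/Λ the quotient map. If f : ℂ → ℂⁿ/Λ is a holomorphic map whose lift F : ℂ → ℂⁿ (which exists since ℂ is simply connected) has bounded derivative, then the closure of the image f(ℂ) in ℂⁿ/Λ is a translate of a real subtorus; in particular, if f is nonconstant, this closure contains a translated subtorus of positive dimension. -/
import Mathlib


open Filter

/-- Green's criterion, lifted version: let `Λ ⊂ ℂⁿ` be a full-rank lattice (discrete,
with compact quotient) and `F : ℂ → ℂⁿ` holomorphic with bounded derivative. Then the
closure of the image of `π ∘ F` in the torus `ℂⁿ/Λ` is a translate of a closed connected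
subgroup (a subtorus), which is nontrivial when `π ∘ F` is nonconstant. -/
theorem brody_curve_in_torus_closure_is_translated_subtorus (n : ℕ)
    (Λ : AddSubgroup (Fin n → ℂ)) (hdisc : DiscreteTopology Λ)
    (hcpt : CompactSpace ((Fin n → ℂ) ⧸ Λ))
    (F : ℂ → Fin n → ℂ) (hF : Differentiable ℂ F)
    (C : ℝ) (hC : ∀ z : ℂ, ‖fderiv ℂ F z‖ ≤ C) :
    ∃ (b : (Fin n → ℂ) ⧸ Λ) (S : AddSubgroup ((Fin n → ℂ) ⧸ Λ)),
      IsClosed (S : Set ((Fin n → ℂ) ⧸ Λ)) ∧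
      IsConnected (S : Set ((Fin n → ℂ) ⧸ Λ)) ∧
      closure (Set.range fun z : ℂ => (QuotientAddGroup.mk (F z) : (Fin n → ℂ) ⧸ Λ))
        = (fun v => b + v) '' (S : Set ((Fin n → ℂ) ⧸ Λ)) ∧
      ((¬ ∀ z w : ℂ, (QuotientAddGroup.mk (F z) : (Fin n → ℂ) ⧸ Λ)
          = QuotientAddGroup.mk (F w)) → S ≠ ⊥) := by
  classical
  -- The derivative is an entire bounded function, hence constant (Liouville).
  have hFd : Differentiable ℂ (fderiv ℂ F) :=
    fun z => ((hF.analyticAt z).fderiv).differentiableAt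
  have hbdd : Bornology.IsBounded (Set.range (fderiv ℂ F)) := by
    rw [isBounded_iff_forall_norm_le]
    exact ⟨C, by rintro x ⟨z, rfl⟩; exact hC z⟩
  set L : ℂ →L[ℂ] (Fin n → ℂ) := fderiv ℂ F 0 with hL
  have hconst : ∀ z, fderiv ℂ F z = L := fun z =>
    hFd.apply_eq_apply_of_bounded hbdd z 0
  set a : Fin n → ℂ := L 1 with ha
  have hLa : ∀ z : ℂ, L z = z • a := by
    intro z
    have : L z = L (z • (1 : ℂ)) := by norm_num
    rw [this, map_smul]
  -- F is affine: F z = z • a + F 0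
  have hsm : ∀ z : ℂ, HasFDerivAt (fun w : ℂ => w • a) L z := by
    intro z
    have h1 : HasFDerivAt (fun w : ℂ => L w) L z := L.hasFDerivAt
    have : (fun w : ℂ => w • a) = fun w : ℂ => L w := by
      funext w; rw [hLa]
    rw [this]
    exact h1
  have hDconst : ∀ z : ℂ, F z - z • a = F 0 - (0:ℂ) • a := by
    intro z
    have hD : Differentiable ℂ (fun w : ℂ => F w - w • a) :=
      hF.sub fun w => (hsm w).differentiableAt
    refine is_const_of_fderiv_eq_zero hD (fun w => ?_) z 0
    have : HasFDerivAt (fun w : ℂ => F w - w • a) (L - L) w :=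
      ((hF w).hasFDerivAt.congr_fderiv (hconst w)).sub (hsm w)
    simpa using this.fderiv
  have hFaff : ∀ z : ℂ, F z = F 0 + z • a := by
    intro z
    have := hDconst z
    simp only [zero_smul, sub_zero] at this
    rw [← this]; abel
  -- the one-parameter subgroup
  let φ : ℂ →+ ((Fin n → ℂ) ⧸ Λ) :=
    AddMonoidHom.mk' (fun z => QuotientAddGroup.mk (z • a))
      (by
        intro x y
        show (QuotientAddGroup.mk ((x + y) • a) : (Fin n → ℂ) ⧸ Λ) = _
        rw [add_smul]
        rfl)
  have hφcont : Continuous φ := by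
    exact continuous_quotient_mk'.comp (continuous_id.smul continuous_const)
  set S : AddSubgroup ((Fin n → ℂ) ⧸ Λ) := φ.range.topologicalClosure with hS
  have hScoe : (S : Set ((Fin n → ℂ) ⧸ Λ)) = closure (Set.range φ) := by
    simp [hS, AddSubgroup.topologicalClosure]
  refine ⟨QuotientAddGroup.mk (F 0), S, ?_, ?_, ?_, ?_⟩
  · rw [hScoe]; exact isClosed_closure
  · rw [hScoe]
    refine IsConnected.closure ?_
    have : IsConnected (Set.range φ) := by
      rw [← Set.image_univ]
      exact (isConnected_univ).image _ hφcont.continuousOn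
    exact this
  · have hre : (Set.range fun z : ℂ => (QuotientAddGroup.mk (F z) : (Fin n → ℂ) ⧸ Λ))
        = (fun v => (QuotientAddGroup.mk (F 0) : (Fin n → ℂ) ⧸ Λ) + v) '' Set.range φ := by
      ext q
      simp only [Set.mem_image, Set.mem_range, exists_exists_eq_and]
      constructor
      · rintro ⟨z, rfl⟩
        refine ⟨z, ?_⟩
        show (QuotientAddGroup.mk (F 0) : (Fin n → ℂ) ⧸ Λ) + φ z = QuotientAddGroup.mk (F z)
        rw [hFaff z]
        rfl
      · rintro ⟨z, rfl⟩
        refine ⟨z, ?_⟩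
        show (QuotientAddGroup.mk (F z) : (Fin n → ℂ) ⧸ Λ) = QuotientAddGroup.mk (F 0) + φ z
        rw [hFaff z]
        rfl
    rw [hre, hScoe]
    exact ((Homeomorph.addLeft
      (QuotientAddGroup.mk (F 0) : (Fin n → ℂ) ⧸ Λ)).image_closure (Set.range φ)).symm
  · intro hnc hbot
    apply hnc
    intro z w
    have hz : ∀ u : ℂ, φ u = 0 := by
      intro u
      have : φ u ∈ S := φ.range.le_topologicalClosure ⟨u, rfl⟩
      rw [hbot] at this
      simpa using this
    have key : ∀ u : ℂ, (QuotientAddGroup.mk (F u) : (Fin n → ℂ) ⧸ Λ)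
        = QuotientAddGroup.mk (F 0) := by
      intro u
      rw [hFaff u, QuotientAddGroup.mk_add]
      have := hz u
      simp only [φ, AddMonoidHom.mk'_apply] at this
      rw [this, add_zero]
    rw [key z, key w]
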